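/- arXiv:2605.13162 — 2 statements merged into one kernel-verified Lean document; each statement's English description precedes it below -/
import Mathlib

section
/- Let N ≥ 1, let s, s' : Fin N → ℝ, and for each k ∈ ℕ and each head h ∈ Fin N let ᾱ^k_h, ᾱ'^k_h : Fin N → ℝ be probability vectors on Fin N. Suppose there exist disjoint subsets S, S' of Fin N such that for every head h, Σ_{n ∉ S} ᾱ^k_h n → 0 and Σ_{n ∉ S'} ᾱ'^k_h n → 0 as k → ∞. Define β^k_h = Σ_{n} σ(s n) · σ(s' n) · ᾱ^k_h n · ᾱ'^k_h n. Then β^k_h → 0 as k → ∞ for every head h, and consequently max_{h} β^k_h → 0. -/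
open Filter Topology

/-- The sigmoid function σ(x) = 1/(1 + exp(−x)). -/
noncomputable def sigmoid (x : ℝ) : ℝ := 1 / (1 + Real.exp (-x))

lemma sigmoid_nonneg (x : ℝ) : 0 ≤ sigmoid x := by
  unfold sigmoid
  positivity

lemma sigmoid_le_one (x : ℝ) : sigmoid x ≤ 1 := by
  unfold sigmoid
  rw [div_le_one (by positivity)]
  linarith [Real.exp_pos (-x)]

/-- Under routing specialization (the per-head routing
distributions of the two tasks concentrate on disjoint subsets `S`, `S'`),
every gating coefficient `β^k_h = Σ_n σ(s n)·σ(s' n)·ᾱ^k_h n·ᾱ'^k_h n` tends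
to 0, and consequently `max_h β^k_h → 0`. -/
theorem gating_coefficients_tendsto_zero
    (N : ℕ) (hN : 1 ≤ N)
    (s s' : Fin N → ℝ)
    (α α' : ℕ → Fin N → Fin N → ℝ)
    (hα_nonneg : ∀ k h n, 0 ≤ α k h n) (hα_sum : ∀ k h, ∑ n, α k h n = 1)
    (hα'_nonneg : ∀ k h n, 0 ≤ α' k h n) (hα'_sum : ∀ k h, ∑ n, α' k h n = 1)
    (S S' : Finset (Fin N)) (hSS' : Disjoint S S')
    (hαS : ∀ h, Tendsto (fun k => ∑ n ∈ Sᶜ, α k h n) atTop (𝓝 0))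
    (hα'S' : ∀ h, Tendsto (fun k => ∑ n ∈ S'ᶜ, α' k h n) atTop (𝓝 0)) :
    (∀ h, Tendsto
        (fun k => ∑ n, sigmoid (s n) * sigmoid (s' n) * α k h n * α' k h n)
        atTop (𝓝 0)) ∧
      Tendsto
        (fun k => Finset.univ.sup' ⟨⟨0, hN⟩, Finset.mem_univ _⟩
          (fun h => ∑ n, sigmoid (s n) * sigmoid (s' n) * α k h n * α' k h n))
        atTop (𝓝 0) := by
  have hα_le_one : ∀ k h n, α k h n ≤ 1 := by
    intro k h n
    calc α k h n ≤ ∑ m, α k h m :=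
          Finset.single_le_sum (fun m _ => hα_nonneg k h m) (Finset.mem_univ n)
      _ = 1 := hα_sum k h
  have hα'_le_one : ∀ k h n, α' k h n ≤ 1 := by
    intro k h n
    calc α' k h n ≤ ∑ m, α' k h m :=
          Finset.single_le_sum (fun m _ => hα'_nonneg k h m) (Finset.mem_univ n)
      _ = 1 := hα'_sum k h
  have hβ_nonneg : ∀ k h,
      0 ≤ ∑ n, sigmoid (s n) * sigmoid (s' n) * α k h n * α' k h n := by
    intro k h
    apply Finset.sum_nonneg
    intro n _
    have := sigmoid_nonneg (s n); have := sigmoid_nonneg (s' n)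
    have := hα_nonneg k h n; have := hα'_nonneg k h n
    positivity
  have prod4 : ∀ a b c d : ℝ, 0 ≤ a → a ≤ 1 → 0 ≤ b → b ≤ 1 → 0 ≤ c → c ≤ 1 →
      0 ≤ d → a * b * c * d ≤ d := by
    intro a b c d ha0 ha1 hb0 hb1 hc0 hc1 hd0
    have habc : a * b * c ≤ 1 := mul_le_one₀ (mul_le_one₀ ha1 hb0 hb1) hc0 hc1
    calc a * b * c * d ≤ 1 * d := mul_le_mul_of_nonneg_right habc hd0
      _ = d := one_mul d
  have hβ_le : ∀ k h,
      (∑ n, sigmoid (s n) * sigmoid (s' n) * α k h n * α' k h n)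
        ≤ (∑ n ∈ Sᶜ, α k h n) + ∑ n ∈ S'ᶜ, α' k h n := by
    intro k h
    have key : ∀ n : Fin N,
        sigmoid (s n) * sigmoid (s' n) * α k h n * α' k h n
          ≤ (if n ∈ Sᶜ then α k h n else 0) + (if n ∈ S'ᶜ then α' k h n else 0) := by
      intro n
      by_cases hn : n ∈ S
      · have hn' : n ∈ S'ᶜ := Finset.mem_compl.mpr
          (fun hmem => (Finset.disjoint_left.mp hSS') hn hmem)
        have hnS : n ∉ Sᶜ := by simpa using hn
        rw [if_neg hnS, if_pos hn', zero_add]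
        exact prod4 _ _ _ _ (sigmoid_nonneg _) (sigmoid_le_one _) (sigmoid_nonneg _)
          (sigmoid_le_one _) (hα_nonneg k h n) (hα_le_one k h n) (hα'_nonneg k h n)
      · have hnS : n ∈ Sᶜ := Finset.mem_compl.mpr hn
        rw [if_pos hnS]
        have h2 : 0 ≤ (if n ∈ S'ᶜ then α' k h n else 0) := by
          split
          · exact hα'_nonneg k h n
          · exact le_rfl
        have hmain : sigmoid (s n) * sigmoid (s' n) * α k h n * α' k h n ≤ α k h n := by
          have : sigmoid (s n) * sigmoid (s' n) * α k h n * α' k h n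
              = sigmoid (s n) * sigmoid (s' n) * α' k h n * α k h n := by ring
          rw [this]
          exact prod4 _ _ _ _ (sigmoid_nonneg _) (sigmoid_le_one _) (sigmoid_nonneg _)
            (sigmoid_le_one _) (hα'_nonneg k h n) (hα'_le_one k h n) (hα_nonneg k h n)
        linarith
    calc (∑ n, sigmoid (s n) * sigmoid (s' n) * α k h n * α' k h n)
        ≤ ∑ n, ((if n ∈ Sᶜ then α k h n else 0) + (if n ∈ S'ᶜ then α' k h n else 0)) :=
          Finset.sum_le_sum (fun n _ => key n)
      _ = (∑ n ∈ Sᶜ, α k h n) + ∑ n ∈ S'ᶜ, α' k h n := by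
          rw [Finset.sum_add_distrib, Finset.sum_ite_mem, Finset.sum_ite_mem,
            Finset.univ_inter, Finset.univ_inter]
  have hβ : ∀ h, Tendsto
      (fun k => ∑ n, sigmoid (s n) * sigmoid (s' n) * α k h n * α' k h n)
      atTop (𝓝 0) := by
    intro h
    have hub : Tendsto (fun k => (∑ n ∈ Sᶜ, α k h n) + ∑ n ∈ S'ᶜ, α' k h n)
        atTop (𝓝 0) := by
      have := (hαS h).add (hα'S' h)
      simpa using this
    exact tendsto_of_tendsto_of_tendsto_of_le_of_le tendsto_const_nhds hub
      (fun k => hβ_nonneg k h) (fun k => hβ_le k h)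
  refine ⟨hβ, ?_⟩
  have hsum : Tendsto
      (fun k => ∑ h, ∑ n, sigmoid (s n) * sigmoid (s' n) * α k h n * α' k h n)
      atTop (𝓝 0) := by
    have := tendsto_finset_sum (Finset.univ : Finset (Fin N)) (fun h _ => hβ h)
    simpa using this
  apply tendsto_of_tendsto_of_tendsto_of_le_of_le tendsto_const_nhds hsum
  · intro k
    dsimp only
    obtain ⟨h0, hh0, hval⟩ := Finset.exists_mem_eq_sup' ⟨⟨0, hN⟩, Finset.mem_univ _⟩
      (fun h => ∑ n, sigmoid (s n) * sigmoid (s' n) * α k h n * α' k h n)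
    rw [hval]
    exact hβ_nonneg k h0
  · intro k
    dsimp only
    apply Finset.sup'_le
    intro h _
    exact Finset.single_le_sum (fun h' _ => hβ_nonneg k h') (Finset.mem_univ h)
end

section
/- Let N ≥ 1, let s, s' : Fin N → ℝ, let g_h, g'_h (for h ∈ Fin N) be fixed real r × D matrices, and for each k ∈ ℕ and each head h ∈ Fin N let ᾱ^k_h, ᾱ'^k_h : Fin N → ℝ be probability vectors on Fin N. Suppose there exist disjoint subsets S, S' of Fin N such that for every head h, Σ_{n ∉ S} ᾱ^k_h n → 0 and Σ_{n ∉ S'} ᾱ'^k_h n → 0 as k → ∞. Define β^k_h = Σ_{n} σ(s n) · σ(s' n) · ᾱ^k_h n · ᾱ'^k_h n. Then |Σ_{h} β^k_h · ⟨g_h, g'_h⟩_F| → 0 as k → ∞. -/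
open Filter Topology

/-- Full conclusion of Proposition 1: under routing
specialization (disjoint concentration sets `S`, `S'` for the two tasks'
routing distributions), the routed cross-task gradient interaction
`|Σ_h β^k_h ⟨g_h, g'_h⟩_F| → 0`, where
`β^k_h = Σ_n σ(s n)·σ(s' n)·ᾱ^k_h n·ᾱ'^k_h n`. -/
theorem routed_cross_task_interaction_tendsto_zero
    (N r D : ℕ) (hN : 1 ≤ N)
    (s s' : Fin N → ℝ)
    (g g' : Fin N → Matrix (Fin r) (Fin D) ℝ)
    (α α' : ℕ → Fin N → Fin N → ℝ)
    (hα_nonneg : ∀ k h n, 0 ≤ α k h n) (hα_sum : ∀ k h, ∑ n, α k h n = 1)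
    (hα'_nonneg : ∀ k h n, 0 ≤ α' k h n) (hα'_sum : ∀ k h, ∑ n, α' k h n = 1)
    (S S' : Finset (Fin N)) (hSS' : Disjoint S S')
    (hαS : ∀ h, Tendsto (fun k => ∑ n ∈ Sᶜ, α k h n) atTop (𝓝 0))
    (hα'S' : ∀ h, Tendsto (fun k => ∑ n ∈ S'ᶜ, α' k h n) atTop (𝓝 0)) :
    Tendsto
      (fun k => |∑ h, (∑ n, sigmoid (s n) * sigmoid (s' n) * α k h n * α' k h n) *
          (∑ i, ∑ j, g h i j * g' h i j)|)
      atTop (𝓝 0) := by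
  -- each β^k_h tends to 0
  have hterm_nonneg : ∀ k h n, 0 ≤ sigmoid (s n) * sigmoid (s' n) * α k h n * α' k h n := by
    intro k h n
    have := sigmoid_nonneg (s n); have := sigmoid_nonneg (s' n)
    have := hα_nonneg k h n; have := hα'_nonneg k h n
    positivity
  have hα_le_one : ∀ k h n, α k h n ≤ 1 := by
    intro k h n
    calc α k h n ≤ ∑ m, α k h m :=
          Finset.single_le_sum (fun m _ => hα_nonneg k h m) (Finset.mem_univ n)
      _ = 1 := hα_sum k h
  have hα'_le_one : ∀ k h n, α' k h n ≤ 1 := by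
    intro k h n
    calc α' k h n ≤ ∑ m, α' k h m :=
          Finset.single_le_sum (fun m _ => hα'_nonneg k h m) (Finset.mem_univ n)
      _ = 1 := hα'_sum k h
  have hβ : ∀ h, Tendsto (fun k => ∑ n, sigmoid (s n) * sigmoid (s' n) * α k h n * α' k h n)
      atTop (𝓝 0) := by
    intro h
    have h0 : Tendsto (fun _ : ℕ => (0 : ℝ)) atTop (𝓝 0) := tendsto_const_nhds
    have hupper : Tendsto (fun k => (∑ n ∈ Sᶜ, α k h n) + ∑ n ∈ S'ᶜ, α' k h n)
        atTop (𝓝 0) := by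
      have := (hαS h).add (hα'S' h)
      simpa using this
    refine tendsto_of_tendsto_of_tendsto_of_le_of_le h0 hupper ?_ ?_
    · intro k
      exact Finset.sum_nonneg fun n _ => hterm_nonneg k h n
    · intro k
      have hsplit : (∑ n, sigmoid (s n) * sigmoid (s' n) * α k h n * α' k h n) ≤
          (∑ n ∈ Sᶜ, sigmoid (s n) * sigmoid (s' n) * α k h n * α' k h n) +
          ∑ n ∈ S'ᶜ, sigmoid (s n) * sigmoid (s' n) * α k h n * α' k h n := by
        have hcover : (Finset.univ : Finset (Fin N)) ⊆ Sᶜ ∪ S'ᶜ := by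
          intro n _
          rw [Finset.mem_union, Finset.mem_compl, Finset.mem_compl]
          by_contra hc
          push_neg at hc
          exact (Finset.disjoint_left.mp hSS' hc.1) hc.2
        calc (∑ n, sigmoid (s n) * sigmoid (s' n) * α k h n * α' k h n)
            ≤ ∑ n ∈ Sᶜ ∪ S'ᶜ, sigmoid (s n) * sigmoid (s' n) * α k h n * α' k h n :=
              Finset.sum_le_sum_of_subset_of_nonneg hcover
                (fun n _ _ => hterm_nonneg k h n)
          _ ≤ (∑ n ∈ Sᶜ, sigmoid (s n) * sigmoid (s' n) * α k h n * α' k h n) +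
              ∑ n ∈ S'ᶜ, sigmoid (s n) * sigmoid (s' n) * α k h n * α' k h n := by
              have hui := Finset.sum_union_inter (s₁ := Sᶜ) (s₂ := S'ᶜ)
                (f := fun n => sigmoid (s n) * sigmoid (s' n) * α k h n * α' k h n)
              have hint : 0 ≤ ∑ n ∈ Sᶜ ∩ S'ᶜ,
                  sigmoid (s n) * sigmoid (s' n) * α k h n * α' k h n :=
                Finset.sum_nonneg fun n _ => hterm_nonneg k h n
              linarith
      refine hsplit.trans (add_le_add ?_ ?_)
      · refine Finset.sum_le_sum fun n _ => ?_
        calc sigmoid (s n) * sigmoid (s' n) * α k h n * α' k h n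
            ≤ 1 * 1 * α k h n * 1 := by
              gcongr <;> first
                | exact hα_nonneg k h n | exact hα'_nonneg k h n
                | exact hα_le_one k h n | exact hα'_le_one k h n
                | exact sigmoid_nonneg _ | exact sigmoid_le_one _
                | simpa using hα_nonneg k h n | simpa using hα'_nonneg k h n | positivity
          _ = α k h n := by ring
      · refine Finset.sum_le_sum fun n _ => ?_
        calc sigmoid (s n) * sigmoid (s' n) * α k h n * α' k h n
            ≤ 1 * 1 * 1 * α' k h n := by
              gcongr <;> first
                | exact hα_nonneg k h n | exact hα'_nonneg k h n
                | exact hα_le_one k h n | exact hα'_le_one k h n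
                | exact sigmoid_nonneg _ | exact sigmoid_le_one _
                | simpa using hα_nonneg k h n | simpa using hα'_nonneg k h n | positivity
          _ = α' k h n := by ring
  have hsum : Tendsto
      (fun k => ∑ h, (∑ n, sigmoid (s n) * sigmoid (s' n) * α k h n * α' k h n) *
          (∑ i, ∑ j, g h i j * g' h i j)) atTop (𝓝 0) := by
    have := tendsto_finset_sum (Finset.univ : Finset (Fin N))
      (fun h _ => (hβ h).mul_const (∑ i, ∑ j, g h i j * g' h i j))
    simpa using this
  simpa using hsum.abs
end
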